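/- arXiv:1507.05232 — 2 statements merged into one kernel-verified Lean document; each statement's English description precedes it below -/
import Mathlib

section
/- On the cylinder $Q = B_1 \times (0,1) \subset \mathbb{R}^n \times \mathbb{R}$, consider the operator $\mathcal{L}u = D_t u - \Delta u + \frac{(n+1)x_i}{|x|^2} D_i u + u$ (summation over $i$). The function $U(x,t) = 2t - t^2 - |x|^2 - \tfrac{1}{2}$ satisfies: (i) $\mathcal{L}U < 0$ a.e. in $Q$; (ii) $U \le 0$ on the parabolic boundary $\partial' Q = (B_1 \times \{0\}) \cup (\partial B_1 \times [0,1))$; (iii) $U(0,1) = \tfrac{1}{2} > 0$. Hence the maximum principle fails for this operator with drift $|b(x)| = (n+1)/|x|$. -/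
variable {n : ℕ}

local notation "E" => EuclideanSpace ℝ (Fin n)

lemma sum_sq_eq_norm_sq (x : EuclideanSpace ℝ (Fin n)) : ∑ i, (x i) ^ 2 = ‖x‖ ^ 2 := by
  rw [EuclideanSpace.norm_eq, Real.sq_sqrt (by positivity)]
  simp [sq_abs]

/-- Counterexample (Remark 4.1): on `Q = B₁ × (0,1)`, for the operator
`ℒu = D_t u - Δu + ((n+1)xᵢ/|x|²) Dᵢu + u`, the function
`U(x,t) = 2t - t² - |x|² - 1/2` satisfies `ℒU < 0` for `x ≠ 0`
(with `D_tU = 2-2t`, `ΔU = -2n`, `DᵢU = -2xᵢ` plugged in), `U ≤ 0` on the parabolic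
boundary, yet `U(0,1) = 1/2 > 0`. -/
theorem stmt_9 :
    (∀ (x : E) (t : ℝ), ‖x‖ < 1 → x ≠ 0 → 0 < t → t < 1 →
      (2 - 2 * t) + 2 * (n : ℝ) +
        (∑ i, (((n : ℝ) + 1) * x i / ‖x‖ ^ 2) * (-(2 * x i))) +
        (2 * t - t ^ 2 - ‖x‖ ^ 2 - 1 / 2) < 0) ∧
    (∀ (x : E) (t : ℝ), ((‖x‖ ≤ 1 ∧ t = 0) ∨ (‖x‖ = 1 ∧ 0 ≤ t ∧ t < 1)) →
      2 * t - t ^ 2 - ‖x‖ ^ 2 - 1 / 2 ≤ 0) ∧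
    2 * (1 : ℝ) - 1 ^ 2 - ‖(0 : E)‖ ^ 2 - 1 / 2 = 1 / 2 := by
  refine ⟨?_, ?_, by norm_num⟩
  · intro x t _ hx ht ht1
    have hnx : ‖x‖ ≠ 0 := norm_ne_zero_iff.mpr hx
    have hsum : (∑ i, (((n : ℝ) + 1) * x i / ‖x‖ ^ 2) * (-(2 * x i)))
        = -2 * ((n : ℝ) + 1) := by
      have : (∑ i, (((n : ℝ) + 1) * x i / ‖x‖ ^ 2) * (-(2 * x i)))
          = (-2 * ((n : ℝ) + 1) / ‖x‖ ^ 2) * ∑ i, (x i) ^ 2 := by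
        rw [Finset.mul_sum]; congr 1; ext i; ring
      rw [this, sum_sq_eq_norm_sq, div_mul_cancel₀ _ (pow_ne_zero 2 hnx)]
    rw [hsum]
    have hx2 : 0 < ‖x‖ ^ 2 := by positivity
    nlinarith
  · intro x t h
    rcases h with ⟨hx, ht⟩ | ⟨hx, ht0, ht1⟩
    · have : 0 ≤ ‖x‖ ^ 2 := by positivity
      nlinarith
    · rw [hx]; nlinarith
end

section
/- Let $v$ be a measurable function on $Q = \Omega \times (0,T)$, let $\sigma, a$ be measurable with $\sigma > 0$ and $\det a > 0$ a.e., let $n \ge 1$, and let $p, q \in (1,\infty)$ satisfy $\frac{n}{p} + \frac{1}{q} = 1$ with $p < q$. Set $\theta = \frac{n+1}{q} \in (0,1)$. Then $\big\| v \cdot \sigma^{1/q} (\det a)^{1/p} \big\|_{L_{p'}^x L_{q'}^t(Q)} \le \big\| v \cdot (\sigma \det a)^{1/(n+1)} \big\|_{L_{(n+1)/n}(Q)}^{\theta} \cdot \big\| v \cdot (\det a)^{1/n} \big\|_{L_{n/(n-1)}^x L_1^t(Q)}^{1-\theta}.$ -/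
open MeasureTheory ENNReal

/-- Mixed Lebesgue "norm" with exponent `p ∈ [1,∞]` of an `ℝ≥0∞`-valued function. -/
noncomputable def MNorm {α : Type*} [MeasurableSpace α] (p : ℝ≥0∞) (μ : Measure α)
    (f : α → ℝ≥0∞) : ℝ≥0∞ :=
  if p = ∞ then essSup f μ else (∫⁻ a, f a ^ p.toReal ∂μ) ^ (1 / p.toReal)

/-!
Almost everywhere `v σ^{1/q} (det a)^{1/p} = F^θ H^{1-θ}` with `F = v (σ det a)^{1/(n+1)}` and
`H = v (det a)^{1/n}`, since `θ/(n+1) = 1/q` and `θ/(n+1) + (1-θ)/n = 1/p`. Hölder's inequality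
in the form `‖F^θ H^{1-θ}‖_p ≤ ‖F‖_{p₀}^θ ‖H‖_{p₁}^{1-θ}` for `1/p = θ/p₀ + (1-θ)/p₁` is applied
first in `t`, with exponents `(q', (n+1)/n, 1)`, and then in `x`, with exponents
`(p', (n+1)/n, n/(n-1))`; Tonelli identifies the iterated `L_{(n+1)/n}` norm of `F` with its
norm on `Q`.
-/

namespace MeasureTheory

variable {α β : Type*} [MeasurableSpace α] [MeasurableSpace β] {μ : Measure α}

theorem MNorm_eq_eLpNorm {p : ℝ≥0∞} (hp : p ≠ 0) (f : α → ℝ≥0∞) :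
    MNorm p μ f = eLpNorm f p μ := by
  unfold MNorm
  split_ifs with h
  · simp [h, eLpNormEssSup]
  · simp [eLpNorm, eLpNorm', hp, h]

theorem eLpNorm_mul_const_of_ne_top {f : α → ℝ≥0∞} (hf : AEMeasurable f μ) {p : ℝ≥0∞}
    (hp₀ : p ≠ 0) (hp : p ≠ ∞) (c : ℝ≥0∞) :
    eLpNorm (fun x => f x * c) p μ = eLpNorm f p μ * c := by
  have hr : 0 < p.toReal := toReal_pos hp₀ hp
  simp only [eLpNorm_eq_lintegral_rpow_enorm_toReal hp₀ hp, enorm_eq_self,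
    mul_rpow_of_nonneg _ _ hr.le]
  rw [lintegral_mul_const'' _ (hf.pow_const _), mul_rpow_of_nonneg _ _ (by positivity),
    ← rpow_mul, mul_one_div_cancel hr.ne', rpow_one]

theorem eLpNorm_mul_le_mul_eLpNorm {f g : α → ℝ≥0∞} (hf : AEMeasurable f μ)
    (hg : AEMeasurable g μ) {p q r : ℝ≥0∞} (hp : p ≠ ∞) (hpqr : p⁻¹ + q⁻¹ = r⁻¹) :
    eLpNorm (f * g) r μ ≤ eLpNorm f p μ * eLpNorm g q μ := by
  rcases eq_or_ne r 0 with rfl | hr₀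
  · simp
  have hp₀ : p ≠ 0 := by
    rintro rfl
    rw [inv_zero, top_add, eq_comm, inv_eq_top] at hpqr
    exact hr₀ hpqr
  have hr : r ≠ ∞ := by
    rintro rfl
    rw [inv_top, add_eq_zero, ENNReal.inv_eq_zero] at hpqr
    exact hp hpqr.1
  rcases eq_or_ne q ∞ with rfl | hq
  · obtain rfl : r = p := by simpa using hpqr.symm
    have hle : ∀ᵐ x ∂μ, ‖(f * g) x‖ₑ ≤ ‖f x * essSup g μ‖ₑ := by
      filter_upwards [ae_le_essSup g] with x hx
      exact mul_le_mul_right hx (f x)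
    calc eLpNorm (f * g) r μ ≤ eLpNorm (fun x => f x * essSup g μ) r μ :=
          eLpNorm_mono_enorm_ae hle
      _ = eLpNorm f r μ * eLpNorm g ∞ μ := by
          rw [eLpNorm_mul_const_of_ne_top hf hr₀ hr, eLpNorm_exponent_top,
            eLpNormEssSup_eq_essSup_enorm]
          rfl
  have hq₀ : q ≠ 0 := by
    rintro rfl
    rw [inv_zero, add_top, eq_comm, inv_eq_top] at hpqr
    exact hr₀ hpqr
  have hreal : 1 / r.toReal = 1 / p.toReal + 1 / q.toReal := by
    simp only [one_div, ← toReal_inv, ← hpqr]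
    exact toReal_add (inv_ne_top.2 hp₀) (inv_ne_top.2 hq₀)
  have hr' : 0 < r.toReal := toReal_pos hr₀ hr
  have hrp : r.toReal < p.toReal := lt_of_one_div_lt_one_div (toReal_pos hp₀ hp) <| by
    rw [hreal]
    exact lt_add_of_pos_right _ (one_div_pos.2 (toReal_pos hq₀ hq))
  simp only [eLpNorm_eq_lintegral_rpow_enorm_toReal hr₀ hr,
    eLpNorm_eq_lintegral_rpow_enorm_toReal hp₀ hp, eLpNorm_eq_lintegral_rpow_enorm_toReal hq₀ hq,
    enorm_eq_self]
  exact ENNReal.lintegral_Lp_mul_le_Lq_mul_Lr hr' hrp hreal μ hf hg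

theorem eLpNorm_rpow_div (F : α → ℝ≥0∞) {θ : ℝ} (hθ : 0 < θ) (p : ℝ≥0∞) :
    eLpNorm (fun x => F x ^ θ) (p / ENNReal.ofReal θ) μ = eLpNorm F p μ ^ θ := by
  have h := eLpNorm_enorm_rpow (μ := μ) (p := p / ENNReal.ofReal θ) F hθ
  rwa [ENNReal.div_mul_cancel (ofReal_pos.2 hθ).ne' ofReal_ne_top] at h

theorem eLpNorm_rpow_mul_rpow_le {F H : α → ℝ≥0∞} (hF : AEMeasurable F μ)
    (hH : AEMeasurable H μ) {θ : ℝ} (hθ₀ : 0 < θ) (hθ₁ : θ < 1) {p p₀ p₁ : ℝ≥0∞}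
    (hp₀ : p₀ ≠ ∞)
    (hp : p⁻¹ = ENNReal.ofReal θ * p₀⁻¹ + ENNReal.ofReal (1 - θ) * p₁⁻¹) :
    eLpNorm (fun x => F x ^ θ * H x ^ (1 - θ)) p μ
      ≤ eLpNorm F p₀ μ ^ θ * eLpNorm H p₁ μ ^ (1 - θ) := by
  rw [← eLpNorm_rpow_div F hθ₀, ← eLpNorm_rpow_div H (sub_pos.2 hθ₁)]
  refine eLpNorm_mul_le_mul_eLpNorm (hF.pow_const _) (hH.pow_const _)
    (div_ne_top hp₀ (ofReal_pos.2 hθ₀).ne') ?_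
  rw [hp, ENNReal.inv_div (Or.inl ofReal_ne_top) (Or.inl (ofReal_pos.2 hθ₀).ne'),
    ENNReal.inv_div (Or.inl ofReal_ne_top) (Or.inl (ofReal_pos.2 (sub_pos.2 hθ₁)).ne'),
    div_eq_mul_inv, div_eq_mul_inv]

variable {ν : Measure β} [SFinite ν]

theorem _root_.Measurable.eLpNorm_prod_right {F : α × β → ℝ≥0∞} (hF : Measurable F)
    {q : ℝ≥0∞} (hq : q ≠ ∞) : Measurable fun x => eLpNorm (fun y => F (x, y)) q ν := by
  rcases eq_or_ne q 0 with rfl | hq₀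
  · simp only [eLpNorm_exponent_zero]
    exact measurable_const
  simp only [eLpNorm_eq_lintegral_rpow_enorm_toReal hq₀ hq, enorm_eq_self]
  exact ((hF.pow_const _).lintegral_prod_right').pow_const _

theorem eLpNorm_eLpNorm_eq_eLpNorm_prod {F : α × β → ℝ≥0∞} (hF : AEMeasurable F (μ.prod ν))
    {r : ℝ≥0∞} (hr₀ : r ≠ 0) (hr : r ≠ ∞) :
    eLpNorm (fun x => eLpNorm (fun y => F (x, y)) r ν) r μ = eLpNorm F r (μ.prod ν) := by
  have hr' : 0 < r.toReal := toReal_pos hr₀ hr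
  simp only [eLpNorm_eq_lintegral_rpow_enorm_toReal hr₀ hr, enorm_eq_self, ← rpow_mul,
    one_div_mul_cancel hr'.ne', rpow_one]
  rw [lintegral_prod _ (hF.pow_const _)]

theorem eLpNorm_eLpNorm_le_of_ae_eq_rpow_mul_rpow {f F H : α × β → ℝ≥0∞} (hF : Measurable F)
    (hH : Measurable H) {θ : ℝ} (hθ₀ : 0 < θ) (hθ₁ : θ < 1) {p q r s q₁ : ℝ≥0∞}
    (hr₀ : r ≠ 0) (hr : r ≠ ∞) (hq₁ : q₁ ≠ ∞)
    (hq : q⁻¹ = ENNReal.ofReal θ * r⁻¹ + ENNReal.ofReal (1 - θ) * q₁⁻¹)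
    (hp : p⁻¹ = ENNReal.ofReal θ * r⁻¹ + ENNReal.ofReal (1 - θ) * s⁻¹)
    (hf : f =ᵐ[μ.prod ν] fun z => F z ^ θ * H z ^ (1 - θ)) :
    eLpNorm (fun x => eLpNorm (fun y => f (x, y)) q ν) p μ
      ≤ eLpNorm F r (μ.prod ν) ^ θ
        * eLpNorm (fun x => eLpNorm (fun y => H (x, y)) q₁ ν) s μ ^ (1 - θ) := by
  have hfiber : ∀ᵐ x ∂μ, eLpNorm (fun y => f (x, y)) q ν
      ≤ eLpNorm (fun y => F (x, y)) r ν ^ θ * eLpNorm (fun y => H (x, y)) q₁ ν ^ (1 - θ) := by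
    filter_upwards [Measure.ae_ae_of_ae_prod hf] with x hx
    rw [eLpNorm_congr_ae hx]
    exact eLpNorm_rpow_mul_rpow_le (hF.comp measurable_prodMk_left).aemeasurable
      (hH.comp measurable_prodMk_left).aemeasurable hθ₀ hθ₁ hr hq
  calc eLpNorm (fun x => eLpNorm (fun y => f (x, y)) q ν) p μ
      ≤ eLpNorm (fun x => eLpNorm (fun y => F (x, y)) r ν ^ θ
          * eLpNorm (fun y => H (x, y)) q₁ ν ^ (1 - θ)) p μ := eLpNorm_mono_enorm_ae hfiber
    _ ≤ eLpNorm (fun x => eLpNorm (fun y => F (x, y)) r ν) r μ ^ θ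
          * eLpNorm (fun x => eLpNorm (fun y => H (x, y)) q₁ ν) s μ ^ (1 - θ) :=
        eLpNorm_rpow_mul_rpow_le (hF.eLpNorm_prod_right hr).aemeasurable
          (hH.eLpNorm_prod_right hq₁).aemeasurable hθ₀ hθ₁ hr hp
    _ = _ := by rw [eLpNorm_eLpNorm_eq_eLpNorm_prod hF.aemeasurable hr₀ hr]

end MeasureTheory

namespace ENNReal

theorem ofReal_mul_add_ofReal_one_sub_mul {θ a b : ℝ} (hθ₀ : 0 ≤ θ) (hθ₁ : θ ≤ 1) (ha : 0 ≤ a)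
    (hb : 0 ≤ b) :
    ENNReal.ofReal θ * ENNReal.ofReal a + ENNReal.ofReal (1 - θ) * ENNReal.ofReal b
      = ENNReal.ofReal (θ * a + (1 - θ) * b) := by
  have h1θ : 0 ≤ 1 - θ := sub_nonneg.2 hθ₁
  rw [← ofReal_mul hθ₀, ← ofReal_mul h1θ, ← ofReal_add (by positivity) (by positivity)]

theorem mul_ofReal_rpow_mul_mul_ofReal_rpow (x : ℝ≥0∞) {a b θ : ℝ} (ha : 0 ≤ a) (hb : 0 ≤ b)
    (hθ₀ : 0 ≤ θ) (hθ₁ : θ ≤ 1) :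
    (x * ENNReal.ofReal a) ^ θ * (x * ENNReal.ofReal b) ^ (1 - θ)
      = x * ENNReal.ofReal (a ^ θ * b ^ (1 - θ)) := by
  have h1θ : 0 ≤ 1 - θ := sub_nonneg.2 hθ₁
  rw [mul_rpow_of_nonneg _ _ hθ₀, mul_rpow_of_nonneg _ _ h1θ, mul_mul_mul_comm,
    ← rpow_add_of_nonneg _ _ hθ₀ h1θ, add_sub_cancel, rpow_one, ofReal_rpow_of_nonneg ha hθ₀,
    ofReal_rpow_of_nonneg hb h1θ, ofReal_mul (Real.rpow_nonneg ha _)]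

theorem inv_ofReal_div_sub_one {p : ℝ} (hp : 1 < p) :
    (ENNReal.ofReal (p / (p - 1)))⁻¹ = ENNReal.ofReal ((p - 1) / p) := by
  have : 0 < p - 1 := sub_pos.2 hp
  rw [← ofReal_inv_of_pos (by positivity), inv_div]

theorem inv_natCast_add_one_div_natCast (n : ℕ) :
    (((n : ℝ≥0∞) + 1) / n)⁻¹ = ENNReal.ofReal (n / (n + 1)) := by
  rw [ENNReal.inv_div (Or.inr (by simp)) (Or.inr (by simp)),
    ofReal_div_of_pos (by positivity), ofReal_natCast, ofReal_add (by positivity) zero_le_one,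
    ofReal_natCast, ofReal_one]

theorem inv_natCast_div_natCast_sub_one {n : ℕ} (hn : n ≠ 0) :
    ((n : ℝ≥0∞) / (n - 1))⁻¹ = ENNReal.ofReal ((n - 1) / n) := by
  rw [ENNReal.inv_div (Or.inr (natCast_ne_top n)) (Or.inr (Nat.cast_ne_zero.2 hn)),
    ofReal_div_of_pos (by positivity), ofReal_sub _ zero_le_one, ofReal_natCast, ofReal_one]

end ENNReal

theorem interpolation_exponent_inner {n : ℕ} {q : ℝ} (hq : 1 < q) (hθ : ((n : ℝ) + 1) / q ≤ 1) :
    (ENNReal.ofReal (q / (q - 1)))⁻¹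
      = ENNReal.ofReal ((n + 1) / q) * (((n : ℝ≥0∞) + 1) / n)⁻¹
        + ENNReal.ofReal (1 - (n + 1) / q) * 1⁻¹ := by
  rw [inv_ofReal_div_sub_one hq, inv_natCast_add_one_div_natCast, inv_one, ← ofReal_one,
    ofReal_mul_add_ofReal_one_sub_mul (by positivity) hθ (by positivity) zero_le_one]
  congr 1
  field_simp
  ring

theorem interpolation_exponent_outer {n : ℕ} (hn : n ≠ 0) {p q : ℝ} (hp : 1 < p) (hq : 0 < q)
    (hθ : ((n : ℝ) + 1) / q ≤ 1) (hpq : (n : ℝ) / p + 1 / q = 1) :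
    (ENNReal.ofReal (p / (p - 1)))⁻¹
      = ENNReal.ofReal ((n + 1) / q) * (((n : ℝ≥0∞) + 1) / n)⁻¹
        + ENNReal.ofReal (1 - (n + 1) / q) * ((n : ℝ≥0∞) / (n - 1))⁻¹ := by
  have hn₁ : (1 : ℝ) ≤ n := by exact_mod_cast Nat.one_le_iff_ne_zero.2 hn
  rw [inv_ofReal_div_sub_one hp, inv_natCast_add_one_div_natCast,
    inv_natCast_div_natCast_sub_one hn,
    ofReal_mul_add_ofReal_one_sub_mul (by positivity) hθ (by positivity)
      (div_nonneg (by linarith) (by linarith))]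
  congr 1
  field_simp at hpq ⊢
  linear_combination -hpq

theorem Real.rpow_interpolation_weight {n p q σ d : ℝ} (hn : 0 < n) (hp : p ≠ 0) (hq : q ≠ 0)
    (hpq : n / p + 1 / q = 1) (hσ : 0 ≤ σ) (hd : 0 < d) :
    ((σ * d) ^ (1 / (n + 1))) ^ ((n + 1) / q) * (d ^ (1 / n)) ^ (1 - (n + 1) / q)
      = σ ^ (1 / q) * d ^ (1 / p) := by
  have hσ_exp : 1 / (n + 1) * ((n + 1) / q) = 1 / q := by
    field_simp
  have hd_exp : 1 / q + 1 / n * (1 - (n + 1) / q) = 1 / p := by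
    field_simp at hpq ⊢
    linear_combination -hpq
  rw [← Real.rpow_mul (mul_nonneg hσ hd.le), ← Real.rpow_mul hd.le, Real.mul_rpow hσ hd.le,
    mul_assoc, ← Real.rpow_add hd, hσ_exp, hd_exp]

/-- The key Hölder interpolation step of the Pivotal Lemma: for `n/p + 1/q = 1`,
`1 < p < q < ∞`, `θ = (n+1)/q`,
`‖v σ^{1/q} (det a)^{1/p}‖_{L_{p'}^x L_{q'}^t} ≤
 ‖v (σ det a)^{1/(n+1)}‖_{L_{(n+1)/n}}^θ ‖v (det a)^{1/n}‖_{L_{n/(n-1)}^x L_1^t}^{1-θ}`. -/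
theorem stmt_12 {n : ℕ} (hn : 1 ≤ n) (Ω : Set (EuclideanSpace ℝ (Fin n))) (T : ℝ)
    (p q : ℝ) (hp : 1 < p) (hq : 1 < q) (hpq : (n : ℝ) / p + 1 / q = 1) (hplq : p < q)
    (v σ : EuclideanSpace ℝ (Fin n) × ℝ → ℝ)
    (a : EuclideanSpace ℝ (Fin n) × ℝ → Matrix (Fin n) (Fin n) ℝ)
    (hv : Measurable v) (hσ : Measurable σ) (ha : Measurable fun z => (a z).det)
    (hσpos : ∀ᵐ z ∂((volume.restrict Ω).prod (volume.restrict (Set.Ioo 0 T))), 0 < σ z)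
    (hapos : ∀ᵐ z ∂((volume.restrict Ω).prod (volume.restrict (Set.Ioo 0 T))), 0 < (a z).det) :
    ((n : ℝ) + 1) / q ∈ Set.Ioo (0 : ℝ) 1 ∧
    MNorm (ENNReal.ofReal (p / (p - 1))) (volume.restrict Ω)
      (fun x => MNorm (ENNReal.ofReal (q / (q - 1))) (volume.restrict (Set.Ioo 0 T))
        (fun t => (‖v (x, t)‖₊ : ℝ≥0∞) *
          ENNReal.ofReal (σ (x, t) ^ (1 / q) * (a (x, t)).det ^ (1 / p))))
    ≤ (MNorm (((n : ℝ≥0∞) + 1) / (n : ℝ≥0∞))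
          ((volume.restrict Ω).prod (volume.restrict (Set.Ioo 0 T)))
          (fun z => (‖v z‖₊ : ℝ≥0∞) *
            ENNReal.ofReal ((σ z * (a z).det) ^ (1 / ((n : ℝ) + 1))))) ^ (((n : ℝ) + 1) / q) *
      (MNorm ((n : ℝ≥0∞) / ((n : ℝ≥0∞) - 1)) (volume.restrict Ω)
          (fun x => MNorm 1 (volume.restrict (Set.Ioo 0 T))
            (fun t => (‖v (x, t)‖₊ : ℝ≥0∞) *
              ENNReal.ofReal ((a (x, t)).det ^ (1 / (n : ℝ)))))) ^ (1 - ((n : ℝ) + 1) / q) := by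
  have hn_pos : (0 : ℝ) < n := by exact_mod_cast hn
  have hθ : ((n : ℝ) + 1) / q ∈ Set.Ioo (0 : ℝ) 1 := by
    refine ⟨by positivity, ?_⟩
    have : (n : ℝ) / q < n / p := div_lt_div_of_pos_left hn_pos (by linarith) hplq
    rw [add_div]
    linarith
  refine ⟨hθ, ?_⟩
  have hn_ne_zero : n ≠ 0 := by omega
  have hF : Measurable fun z =>
      (‖v z‖₊ : ℝ≥0∞) * ENNReal.ofReal ((σ z * (a z).det) ^ (1 / ((n : ℝ) + 1))) := by
    fun_prop
  have hH : Measurable fun z => (‖v z‖₊ : ℝ≥0∞) * ENNReal.ofReal ((a z).det ^ (1 / (n : ℝ))) := by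
    fun_prop
  simp only [MNorm_eq_eLpNorm (ofReal_pos.2 (by positivity : 0 < p / (p - 1))).ne',
    MNorm_eq_eLpNorm (ofReal_pos.2 (by positivity : 0 < q / (q - 1))).ne',
    MNorm_eq_eLpNorm one_ne_zero,
    MNorm_eq_eLpNorm (by simp : ((n : ℝ≥0∞) + 1) / n ≠ 0),
    MNorm_eq_eLpNorm (by simp [hn_ne_zero] : (n : ℝ≥0∞) / (n - 1) ≠ 0)]
  refine eLpNorm_eLpNorm_le_of_ae_eq_rpow_mul_rpow
    (f := fun z => (‖v z‖₊ : ℝ≥0∞) * ENNReal.ofReal (σ z ^ (1 / q) * (a z).det ^ (1 / p)))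
    hF hH hθ.1 hθ.2 (by simp) (by simp [ENNReal.div_eq_top, hn_ne_zero]) one_ne_top
    (interpolation_exponent_inner hq hθ.2.le)
    (interpolation_exponent_outer hn_ne_zero hp (by linarith) hθ.2.le hpq) ?_
  filter_upwards [hσpos, hapos] with z hσz hdz
  rw [mul_ofReal_rpow_mul_mul_ofReal_rpow _ (by positivity) (by positivity) hθ.1.le hθ.2.le,
    Real.rpow_interpolation_weight hn_pos (by positivity) (by positivity) hpq hσz.le hdz]
end
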